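/- (Wold decomposition, uniqueness.) Let G = (V, E, s, r) be a countable directed graph and V_r = {v ∈ V : r⁻¹(v) ≠ ∅}. Suppose a TCK family (Q, T) for G on H is unitarily equivalent both to the direct sum family ⊕_{v ∈ V_r} (P^v, S^v)^{(α_v)} ⊕ (R, L) and to ⊕_{v ∈ V_r} (P^v, S^v)^{(α'_v)} ⊕ (R', L'), where for each v ∈ V_r, α_v and α'_v are cardinal multiplicities, (P^v, S^v) is the model TCK family on H_{G,v}, and (R, L), (R', L') are full CK families for G. Then α_v = α'_v for every v ∈ V_r, and (R, L) is unitarily equivalent to (R', L'). -/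

import Mathlib

/-!
The multiplicities and the CK summand are recovered from `(Q, T)` alone. Call the images
`W p ξ_v` of the length-zero path the vacuum vectors. They lie in the wandering space
`{x | Q_v x = x, T_e^* x = 0 for r(e) = v}`, and a wandering vector orthogonal to all of them is
zero: `Q_v x = x` makes it orthogonal to every `ξ_λ` with `r(λ) ≠ v`, `T_e^* x = 0` to every
nonempty `λ` with `r(λ) = v`, and the full CK relation `R_v = ∑ L_e L_e^*` to the CK summand.
So the vacuum vectors at `v` are an orthonormal basis of the wandering space, whence
`#A_v = #A'_v`. The same facts show that the closed span of the model summands is the smallest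
closed `T`-invariant subspace containing all wandering spaces; as it does not depend on the
decomposition, neither does its orthogonal complement, the common range of `WR` and `WR'`.
-/

noncomputable section

open scoped ENNReal InnerProductSpace ComplexOrder
open ContinuousLinearMap

attribute [local instance] Classical.propDecidable

namespace GraphPaper

/-! ### Positivity of operators (without completeness assumptions) -/

/-- A bounded operator on a complex inner product space is positive if all the
inner products `⟪T x, x⟫` are nonnegative (this forces them to be real). -/
def IsPosOp {W : Type*} [NormedAddCommGroup W] [InnerProductSpace ℂ W]
    (T : W →L[ℂ] W) : Prop :=
  ∀ x : W, 0 ≤ (inner ℂ (T x) x : ℂ)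

/-! ### Toeplitz-Cuntz-Krieger families -/

variable {V E : Type*}

variable {H : Type*} [NormedAddCommGroup H] [InnerProductSpace ℂ H] [CompleteSpace H]

/-- The Toeplitz-Cuntz-Krieger relations for a family of projections `P` indexed by
vertices and partial isometries `S` indexed by edges. -/
def IsTCK (s r : E → V) (P : V → H →L[ℂ] H) (S : E → H →L[ℂ] H) : Prop :=
  (∀ v, adjoint (P v) = P v) ∧
  (∀ v, P v ∘L P v = P v) ∧
  (∀ v w, v ≠ w → P v ∘L P w = 0) ∧
  (∀ e, adjoint (S e) ∘L S e = P (s e)) ∧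
  (∀ (v : V) (F : Finset E), (∀ e ∈ F, r e = v) →
    IsPosOp (P v - ∑ e ∈ F, S e ∘L adjoint (S e)))

/-- A TCK family is a full Cuntz-Krieger family if for every vertex `v` receiving at
least one edge, the (unconditionally convergent) sum `∑_{r(e) = v} S_e S_e* x` is `P_v x`. -/
def IsFullCK (s r : E → V) (P : V → H →L[ℂ] H) (S : E → H →L[ℂ] H) : Prop :=
  ∀ v : V, (∃ e, r e = v) → ∀ x : H,
    HasSum (fun e : {e : E // r e = v} => S e.1 (adjoint (S e.1) x)) (P v x)

/-- A TCK family is a Cuntz-Krieger family if `∑_{r(e) = v} S_e S_e* = P_v` for every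
vertex `v` receiving finitely many and at least one edge. -/
def IsCK (s r : E → V) (P : V → H →L[ℂ] H) (S : E → H →L[ℂ] H) : Prop :=
  IsTCK s r P S ∧
  ∀ (v : V) (hfin : {e : E | r e = v}.Finite), hfin.toFinset.Nonempty →
    ∑ e ∈ hfin.toFinset, S e ∘L adjoint (S e) = P v

/-- The generators of a TCK family, indexed by vertices and edges. -/
def gen (P : V → H →L[ℂ] H) (S : E → H →L[ℂ] H) : V ⊕ E → H →L[ℂ] H :=
  Sum.elim P S

variable {K : Type*} [NormedAddCommGroup K] [InnerProductSpace ℂ K] [CompleteSpace K]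

/-- `(Q, T)` on `K` dilates `(P, S)` on `H` via the isometry `W : H → K`:
compressions of arbitrary nonempty words in the generators agree. -/
def Dilates (P : V → H →L[ℂ] H) (S : E → H →L[ℂ] H)
    (Q : V → K →L[ℂ] K) (T : E → K →L[ℂ] K) (W : H →L[ℂ] K) : Prop :=
  (∀ x : H, ‖W x‖ = ‖x‖) ∧
  ∀ l : List (V ⊕ E), l ≠ [] →
    adjoint W ∘L (l.map (gen Q T)).prod ∘L W = (l.map (gen P S)).prod

/-! ### Finite paths -/

/-- A finite path `λ = e_n ⋯ e_1` in the directed graph determined by the source and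
range maps `s r : E → V`, together with a base vertex `src` which is the source of the
path.  The edges are listed as `[e_n, …, e_1]`, with the consecutive compatibility
`s (e_{i+1}) = r (e_i)`, and (when the path is nonempty) `s (e_1) = src`.
A path with no edges is the length-zero path at the vertex `src`. -/
structure GPath (s r : E → V) : Type _ where
  src : V
  edges : List E
  chain : edges.Chain' fun e f => s e = r f
  src_eq : ∀ e ∈ edges.getLast?, s e = src

variable {s r : E → V}

/-- The range of a finite path. -/
def GPath.rng (p : GPath s r) : V := ((p.edges.head?).map r).getD p.src

theorem GPath.ext' {p q : GPath s r} (h1 : p.src = q.src) (h2 : p.edges = q.edges) :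
    p = q := by
  cases p; cases q; simp_all

/-- The length-zero path at a vertex. -/
def GPath.nil (s r : E → V) (v : V) : GPath s r where
  src := v
  edges := []
  chain := List.IsChain.nil
  src_eq := by simp

/-- The tail of a path (removing the first, i.e. last-applied, edge). -/
def GPath.tail (p : GPath s r) : GPath s r where
  src := p.src
  edges := p.edges.tail
  chain := p.chain.tail
  src_eq := by
    intro f hf
    apply p.src_eq
    rcases hp : p.edges with - | ⟨a, t⟩
    · rw [hp] at hf; simp at hf
    · rw [hp] at hf
      rcases t with - | ⟨b, t'⟩
      · simp at hf
      · simpa [List.getLast?_cons_cons] using hf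

/-- The operator `T_λ = T_{e_n} ⋯ T_{e_1}` associated to a finite path `λ`;
for the length-zero path at `v` it is `P_v`. -/
def pathOp (P : V → H →L[ℂ] H) (S : E → H →L[ℂ] H) (p : GPath s r) : H →L[ℂ] H :=
  if p.edges.isEmpty then P p.src else (p.edges.map S).prod

/-- Paths with source `v`. -/
abbrev SPath (s r : E → V) (v : V) : Type _ := {p : GPath s r // p.src = v}

/-! ### The model space and the model TCK family -/

/-- The model Hilbert space `H_{G,v} = ℓ²` of the set of paths with source `v`. -/
abbrev HGv (s r : E → V) (v : V) : Type _ := lp (fun _ : SPath s r v => ℂ) 2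

/-- The basis vector `ξ_λ` of the model space. -/
def xi {v : V} (p : SPath s r v) : HGv s r v := lp.single 2 p 1

/-- Pulling back a function `x : ι → ℂ` along a partially defined map `f`. -/
def pullFun {ι κ : Type*} (f : κ → Option ι) (x : ι → ℂ) (k : κ) : ℂ :=
  ((f k).map x).getD 0

theorem pullFun_core {ι κ : Type*} (f : κ → Option ι)
    (hf : ∀ ⦃k k' : κ⦄ ⦃i : ι⦄, f k = some i → f k' = some i → k = k')
    (x : lp (fun _ : ι => ℂ) 2) :
    Memℓp (pullFun f ⇑x) 2 ∧
      ∑' k : κ, ‖pullFun f ⇑x k‖ ^ (2 : ℝ) ≤ ∑' i : ι, ‖x i‖ ^ (2 : ℝ) := by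
  classical
  have hp : 0 < (2 : ℝ≥0∞).toReal := by norm_num
  have hx : Summable fun i : ι => ‖x i‖ ^ (2 : ℝ) := by
    have := lp.memℓp x
    rw [memℓp_gen_iff hp] at this
    simpa using this
  set σ : Set κ := {k : κ | (f k).isSome} with hσ
  have hmem : ∀ k : σ, ∃ i, f (k : κ) = some i := fun k => Option.isSome_iff_exists.mp k.2
  set h : σ → ι := fun k => (f (k : κ)).get k.2 with hh
  have hfk : ∀ k : σ, f (k : κ) = some (h k) := fun k => (Option.some_get k.2).symm
  have hinj : Function.Injective h := by
    intro a b hab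
    have ha := hfk a
    have hb := hfk b
    rw [hab] at ha
    exact Subtype.ext (hf ha hb)
  have hval : ∀ k : σ, pullFun f ⇑x (k : κ) = x (h k) := by
    intro k
    simp [pullFun, hfk k]
  set g : κ → ℝ := fun k => ‖pullFun f ⇑x k‖ ^ (2 : ℝ) with hg
  have hsupp : Function.support g ⊆ σ := by
    intro k hk
    by_contra hks
    have : f k = none := by
      rw [hσ] at hks
      simpa [Option.isNone_iff_eq_none, Option.not_isSome_iff_eq_none] using hks
    apply hk
    simp [hg, pullFun, this, Real.zero_rpow (by norm_num : (2:ℝ) ≠ 0)]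
  have hcomp : (g ∘ (Subtype.val : σ → κ)) = (fun i => ‖x i‖ ^ (2 : ℝ)) ∘ h := by
    funext k
    simp [hg, Function.comp, hval k]
  have hsummσ : Summable (g ∘ (Subtype.val : σ → κ)) := by
    rw [hcomp]; exact hx.comp_injective hinj
  have hsumm : Summable g := by
    obtain ⟨a, ha⟩ := hsummσ
    exact ⟨a, (hasSum_subtype_iff_of_support_subset hsupp).mp ha⟩
  constructor
  · apply memℓp_gen
    have : (fun k => ‖pullFun f ⇑x k‖ ^ (2 : ℝ≥0∞).toReal) = g := by
      funext k; simp [hg]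
    rw [this]
    exact hsumm
  · have h1 : ∑' k : κ, g k = ∑' k : σ, g k := (tsum_subtype_eq_of_support_subset hsupp).symm
    have h2 : ∑' k : σ, g k ≤ ∑' i : ι, ‖x i‖ ^ (2 : ℝ) := by
      have := tsum_comp_le_tsum_of_inj hx
        (fun i => Real.rpow_nonneg (norm_nonneg _) _) hinj
      calc ∑' k : σ, g k = ∑' k : σ, ((fun i => ‖x i‖ ^ (2 : ℝ)) ∘ h) k := by
            rw [← hcomp]; rfl
        _ ≤ ∑' i : ι, ‖x i‖ ^ (2 : ℝ) := this
    exact h1.trans_le h2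

/-- The bounded operator `lp² ι → lp² κ` induced by a partially defined injection. -/
def pullCLM {ι κ : Type*} (f : κ → Option ι)
    (hf : ∀ ⦃k k' : κ⦄ ⦃i : ι⦄, f k = some i → f k' = some i → k = k') :
    lp (fun _ : ι => ℂ) 2 →L[ℂ] lp (fun _ : κ => ℂ) 2 :=
  LinearMap.mkContinuous
    { toFun := fun x => ⟨pullFun f ⇑x, (pullFun_core f hf x).1⟩
      map_add' := by
        intro x y
        apply lp.ext
        funext k
        show pullFun f ⇑(x + y) k = pullFun f ⇑x k + pullFun f ⇑y k
        rw [lp.coeFn_add]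
        unfold pullFun
        cases f k <;> simp
      map_smul' := by
        intro c x
        apply lp.ext
        funext k
        show pullFun f ⇑(c • x) k = c • pullFun f ⇑x k
        rw [lp.coeFn_smul]
        unfold pullFun
        cases f k <;> simp }
    1
    (by
      intro x
      have hp : 0 < (2 : ℝ≥0∞).toReal := by norm_num
      rw [one_mul]
      set y : lp (fun _ : κ => ℂ) 2 := ⟨pullFun f ⇑x, (pullFun_core f hf x).1⟩ with hy
      show ‖y‖ ≤ ‖x‖
      have hle := (pullFun_core f hf x).2
      have h1 : ‖y‖ ^ (2:ℝ) = ∑' k : κ, ‖pullFun f ⇑x k‖ ^ (2 : ℝ) := by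
        simpa using lp.norm_rpow_eq_tsum hp y
      have h2 : ‖x‖ ^ (2:ℝ) = ∑' i : ι, ‖x i‖ ^ (2 : ℝ) := by
        simpa using lp.norm_rpow_eq_tsum hp x
      have key : ‖y‖ ^ (2:ℝ) ≤ ‖x‖ ^ (2:ℝ) := by rw [h1, h2]; exact hle
      have k2 : ‖y‖ ^ (2:ℕ) ≤ ‖x‖ ^ (2:ℕ) := by
        rw [← Real.rpow_natCast ‖y‖ 2, ← Real.rpow_natCast ‖x‖ 2]
        exact_mod_cast key
      have hs := Real.sqrt_le_sqrt k2
      rwa [Real.sqrt_sq (norm_nonneg y), Real.sqrt_sq (norm_nonneg x)] at hs)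

/-- Decoding map for the model projection at `w`. -/
def decodeP (v w : V) (p : SPath s r v) : Option (SPath s r v) :=
  if p.1.rng = w then some p else none

/-- Decoding map for the model partial isometry at `e`. -/
def decodeS (v : V) (e : E) (p : SPath s r v) : Option (SPath s r v) :=
  if p.1.edges.head? = some e then some ⟨p.1.tail, p.2⟩ else none

theorem decodeP_inj (v w : V) :
    ∀ ⦃k k' : SPath s r v⦄ ⦃i : SPath s r v⦄,
      decodeP v w k = some i → decodeP v w k' = some i → k = k' := by
  intro k k' i h1 h2
  unfold decodeP at h1 h2
  split_ifs at h1 h2 <;> simp_all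

theorem decodeS_inj (v : V) (e : E) :
    ∀ ⦃k k' : SPath s r v⦄ ⦃i : SPath s r v⦄,
      decodeS v e k = some i → decodeS v e k' = some i → k = k' := by
  intro k k' i h1 h2
  unfold decodeS at h1 h2
  split_ifs at h1 h2 with he1 he2
  have hi1 := Option.some.inj h1
  have hi2 := Option.some.inj h2
  apply Subtype.ext
  apply GPath.ext'
  · rw [k.2, k'.2]
  · obtain ⟨t1, ht1⟩ := List.head?_eq_some_iff.mp he1
    obtain ⟨t2, ht2⟩ := List.head?_eq_some_iff.mp he2
    have e1 : k.1.tail.edges = t1 := by simp [GPath.tail, ht1]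
    have e2 : k'.1.tail.edges = t2 := by simp [GPath.tail, ht2]
    have : k.1.tail.edges = k'.1.tail.edges := by
      rw [show k.1.tail = i.1 from congrArg Subtype.val hi1,
        show k'.1.tail = i.1 from congrArg Subtype.val hi2]
    rw [ht1, ht2]
    rw [e1, e2] at this
    rw [this]

/-- The model projection `P^v_w` on `H_{G,v}`: the orthogonal projection onto the span
of the basis vectors `ξ_λ` with `r(λ) = w`. -/
def modelP (s r : E → V) (v w : V) : HGv s r v →L[ℂ] HGv s r v :=
  pullCLM (decodeP v w) (decodeP_inj v w)

/-- The model partial isometry `S^v_e` on `H_{G,v}`: it maps `ξ_λ` to `ξ_{eλ}`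
when `s(e) = r(λ)`, and to `0` otherwise. -/
def modelS (s r : E → V) (v : V) (e : E) : HGv s r v →L[ℂ] HGv s r v :=
  pullCLM (decodeS v e) (decodeS_inj v e)

/-! ### Reducing subspaces, wandering spaces, maximality -/

universe u

/-- A subspace is reducing for a family of operators if it is invariant under all of them
and all their adjoints. -/
def Reduces (Q : V → H →L[ℂ] H) (T : E → H →L[ℂ] H) (M : Submodule ℂ H) : Prop :=
  (∀ w : V, ∀ x ∈ M, Q w x ∈ M ∧ adjoint (Q w) x ∈ M) ∧
  (∀ e : E, ∀ x ∈ M, T e x ∈ M ∧ adjoint (T e) x ∈ M)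

/-- The wandering space `W_v = {x | Q_v x = x, T_e* x = 0 for all e ∈ r⁻¹(v)}`. -/
def wandering (s r : E → V) (Q : V → H →L[ℂ] H) (T : E → H →L[ℂ] H) (v : V) :
    Submodule ℂ H where
  carrier := {x : H | Q v x = x ∧ ∀ e : E, r e = v → adjoint (T e) x = 0}
  add_mem' := by
    intro a b ha hb
    refine ⟨?_, fun e he => ?_⟩
    · rw [map_add, ha.1, hb.1]
    · rw [map_add, ha.2 e he, hb.2 e he, add_zero]
  zero_mem' := ⟨map_zero _, fun e _ => map_zero _⟩
  smul_mem' := by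
    intro c x hx
    refine ⟨?_, fun e he => ?_⟩
    · rw [map_smul, hx.1]
    · rw [map_smul, hx.2 e he, smul_zero]

/-- The restriction of a TCK family to a reducing subspace `M` is a full Cuntz-Krieger
family (expressed via the action on vectors of `M` in the ambient space). -/
def IsFullCKOn (s r : E → V) (Q : V → H →L[ℂ] H) (T : E → H →L[ℂ] H)
    (M : Submodule ℂ H) : Prop :=
  ∀ v : V, (∃ e, r e = v) → ∀ x ∈ M,
    HasSum (fun e : {e : E // r e = v} => T e.1 (adjoint (T e.1) x)) (Q v x)

/-- A TCK family is maximal if for every TCK family dilating it, the range of the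
dilation isometry is reducing. -/
def IsMaxTCK {V E : Type*} (s r : E → V) {H : Type u} [NormedAddCommGroup H]
    [InnerProductSpace ℂ H] [CompleteSpace H]
    (P : V → H →L[ℂ] H) (S : E → H →L[ℂ] H) : Prop :=
  ∀ (K : Type u) [NormedAddCommGroup K] [InnerProductSpace ℂ K] [CompleteSpace K],
    ∀ (Q : V → K →L[ℂ] K) (T : E → K →L[ℂ] K) (W : H →L[ℂ] K),
      IsTCK s r Q T → Dilates P S Q T W →
        ∀ (g : V ⊕ E) (x : H),
          gen Q T g (W x) ∈ Set.range W ∧ adjoint (gen Q T g) (W x) ∈ Set.range W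

end GraphPaper

open Cardinal

section Hilbert

variable {𝕜 H : Type*} [RCLike 𝕜] [NormedAddCommGroup H] [InnerProductSpace 𝕜 H]

theorem eq_zero_of_forall_inner_eq_zero {S : Set H}
    (hS : (Submodule.span 𝕜 S).topologicalClosure = ⊤) {z : H}
    (hz : ∀ u ∈ S, (inner 𝕜 z u : 𝕜) = 0) : z = 0 := by
  have hzero : innerSL 𝕜 z = 0 :=
    ContinuousLinearMap.ext_on (Submodule.dense_iff_topologicalClosure_eq_top.mpr hS) hz
  simpa using congr($hzero z)

theorem Submodule.le_of_orthogonal_inf_eq_bot {K F : Submodule 𝕜 H} [K.HasOrthogonalProjection]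
    (hKF : K ≤ F) (h : Kᗮ ⊓ F = ⊥) : F ≤ K := by
  have := Submodule.sup_orthogonal_inf_of_hasOrthogonalProjection hKF
  rw [h, sup_bot_eq] at this
  exact this.ge

theorem Orthonormal.cardinal_mk_le_mul_aleph0 {ι ι' : Type u} {b : ι → H} {b' : ι' → H}
    (hb : Orthonormal 𝕜 b) (hcov : ∀ i, ∃ i', (inner 𝕜 (b i) (b' i') : 𝕜) ≠ 0) :
    #ι ≤ #ι' * ℵ₀ := by
  set N : ι' → Set ι := fun i' => {i | (inner 𝕜 (b i) (b' i') : 𝕜) ≠ 0}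
  have hN : ∀ i', (N i').Countable := fun i' =>
    (hb.inner_products_summable (b' i')).countable_support.mono fun i hi => by simpa [N] using hi
  have hcover : (⋃ i', N i') = Set.univ :=
    Set.eq_univ_of_forall fun i => Set.mem_iUnion.mpr (hcov i)
  calc #ι = #(⋃ i', N i' : Set ι) := by rw [hcover, mk_univ]
    _ ≤ #ι' * ⨆ i', #(N i') := mk_iUnion_le N
    _ ≤ #ι' * ℵ₀ := by
      gcongr
      exact ciSup_le' fun i' => (hN i').le_aleph0

theorem Orthonormal.cardinal_mk_le_of_finite {ι ι' : Type u} [Finite ι'] {F : Submodule 𝕜 H}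
    {b : ι → H} {b' : ι' → H} (hb : Orthonormal 𝕜 b) (hbF : ∀ i, b i ∈ F)
    (hb'F : ∀ i', b' i' ∈ F) (hmax : ∀ x ∈ F, (∀ i', (inner 𝕜 (b' i') x : 𝕜) = 0) → x = 0) :
    #ι ≤ #ι' := by
  have : Fintype ι' := Fintype.ofFinite ι'
  set C := Submodule.span 𝕜 (Set.range b')
  have : FiniteDimensional 𝕜 C := FiniteDimensional.span_of_finite 𝕜 (Set.finite_range b')
  have hFC : F ≤ C := by
    refine Submodule.le_of_orthogonal_inf_eq_bot
      (Submodule.span_le.mpr (Set.range_subset_iff.mpr hb'F)) ((Submodule.eq_bot_iff _).mpr ?_)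
    rintro x ⟨hxC, hxF⟩
    exact hmax x hxF fun i' => (Submodule.mem_orthogonal C x).mp hxC _
      (Submodule.subset_span (Set.mem_range_self i'))
  calc #ι ≤ Fintype.card (Set.range b') := linearIndependent_le_span' b hb.linearIndependent _
        (Set.range_subset_iff.mpr fun i => hFC (hbF i))
    _ ≤ #ι' := by rw [mk_fintype ι']; exact_mod_cast Fintype.card_range_le b'

theorem Orthonormal.cardinal_mk_le {ι ι' : Type u} {F : Submodule 𝕜 H}
    {b : ι → H} {b' : ι' → H} (hb : Orthonormal 𝕜 b) (hbF : ∀ i, b i ∈ F)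
    (hb'F : ∀ i', b' i' ∈ F) (hmax : ∀ x ∈ F, (∀ i', (inner 𝕜 (b' i') x : 𝕜) = 0) → x = 0) :
    #ι ≤ #ι' := by
  rcases finite_or_infinite ι' with hfin | hinf
  · exact hb.cardinal_mk_le_of_finite hbF hb'F hmax
  · have hcov : ∀ i, ∃ i', (inner 𝕜 (b i) (b' i') : 𝕜) ≠ 0 := by
      intro i
      by_contra! h
      have := hmax (b i) (hbF i) fun i' => inner_eq_zero_symm.mp (h i')
      simpa [this] using hb.1 i
    calc #ι ≤ #ι' * ℵ₀ := hb.cardinal_mk_le_mul_aleph0 hcov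
      _ = #ι' := mul_aleph0_eq (aleph0_le_mk ι')

theorem LinearIsometry.exists_linearIsometryEquiv_of_range_eq {E F : Type*}
    [NormedAddCommGroup E] [InnerProductSpace 𝕜 E] [NormedAddCommGroup F] [InnerProductSpace 𝕜 F]
    (f : E →ₗᵢ[𝕜] H) (g : F →ₗᵢ[𝕜] H)
    (h : LinearMap.range f.toLinearMap = LinearMap.range g.toLinearMap) :
    ∃ U : E ≃ₗᵢ[𝕜] F, ∀ x, g (U x) = f x := by
  refine ⟨f.equivRange.trans ((LinearIsometryEquiv.ofEq _ _ h).trans g.equivRange.symm),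
    fun x => ?_⟩
  rw [← LinearIsometry.equivRange_apply_coe]
  simp

end Hilbert

namespace GraphPaper

variable {V E : Type*} {s r : E → V}

theorem pullCLM_apply {ι κ : Type*} (f : κ → Option ι)
    (hf : ∀ ⦃k k' : κ⦄ ⦃i : ι⦄, f k = some i → f k' = some i → k = k')
    (x : lp (fun _ : ι => ℂ) 2) (k : κ) :
    (pullCLM f hf x : κ → ℂ) k = pullFun f x k := rfl

def SPath.nil (s r : E → V) (v : V) : SPath s r v := ⟨GPath.nil s r v, rfl⟩

def SPath.tail {v : V} (p : SPath s r v) : SPath s r v := ⟨p.1.tail, p.2⟩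

theorem xi_apply {v : V} (p q : SPath s r v) :
    (xi p : SPath s r v → ℂ) q = if q = p then 1 else 0 := by
  rw [xi, lp.single_apply]
  split_ifs <;> simp_all

theorem inner_xi_left {v : V} (p : SPath s r v) (u : HGv s r v) :
    (inner ℂ (xi p) u : ℂ) = u p := by
  simp [xi, lp.inner_single_left]

theorem dense_span_xi (v : V) :
    (Submodule.span ℂ (Set.range (xi : SPath s r v → HGv s r v))).topologicalClosure = ⊤ := by
  have hxi : ⇑(default : HilbertBasis (SPath s r v) ℂ (HGv s r v)) = xi := by
    funext p
    rw [← HilbertBasis.repr_symm_single]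
    rfl
  simpa [hxi] using (default : HilbertBasis (SPath s r v) ℂ (HGv s r v)).dense_span

theorem apply_mem_of_forall_xi_mem {v : V} {F : Type*} [NormedAddCommGroup F] [NormedSpace ℂ F]
    (f : HGv s r v →L[ℂ] F) {M : Submodule ℂ F} (hM : IsClosed (M : Set F))
    (h : ∀ p, f (xi p) ∈ M) (u : HGv s r v) : f u ∈ M := by
  have hle : Submodule.span ℂ (Set.range xi) ≤ M.comap (f : HGv s r v →ₗ[ℂ] F) :=
    Submodule.span_le.mpr (Set.range_subset_iff.mpr h)
  have := Submodule.topologicalClosure_minimal _ hle (hM.preimage f.continuous)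
  rw [dense_span_xi] at this
  exact this Submodule.mem_top

theorem modelP_xi (v w : V) (p : SPath s r v) :
    modelP s r v w (xi p) = if p.1.rng = w then xi p else 0 := by
  apply lp.ext
  funext q
  rw [modelP, pullCLM_apply]
  unfold pullFun decodeP
  split_ifs with hq hp hp
  · simp [xi_apply]
  · simp only [Option.map_some, Option.getD_some, xi_apply]
    rw [if_neg (by rintro rfl; exact hp hq)]
    rfl
  · simp only [Option.map_none, Option.getD_none, xi_apply]
    rw [if_neg (by rintro rfl; exact hq hp)]
  · simp

theorem modelS_xi_tail {v : V} {e : E} {p : SPath s r v} (h : p.1.edges.head? = some e) :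
    modelS s r v e (xi p.tail) = xi p := by
  apply lp.ext
  funext q
  rw [modelS, pullCLM_apply]
  unfold pullFun decodeS
  split_ifs with hq
  · have htail : (⟨q.1.tail, q.2⟩ : SPath s r v) = p.tail ↔ q = p :=
      ⟨fun ht => decodeS_inj v e (by rw [decodeS, if_pos hq, ht]) (by rw [decodeS, if_pos h]; rfl),
        fun hqp => hqp ▸ rfl⟩
    simp [xi_apply, htail]
  · simp only [Option.map_none, Option.getD_none, xi_apply]
    rw [if_neg]
    rintro rfl
    exact hq h

theorem modelS_apply_nil (v : V) (e : E) (u : HGv s r v) :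
    (modelS s r v e u : SPath s r v → ℂ) (SPath.nil s r v) = 0 := by
  simp [modelS, pullCLM_apply, pullFun, decodeS, SPath.nil, GPath.nil]

section Wandering

variable {H : Type*} [NormedAddCommGroup H] [InnerProductSpace ℂ H] [CompleteSpace H]

theorem isClosed_wandering (Q : V → H →L[ℂ] H) (T : E → H →L[ℂ] H) (v : V) :
    IsClosed (wandering s r Q T v : Set H) := by
  have : (wandering s r Q T v : Set H) =
      {x | Q v x = x} ∩ ⋂ e, ⋂ (_ : r e = v), {x | adjoint (T e) x = 0} := by
    ext; simp [wandering]
  rw [this]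
  exact (isClosed_eq (Q v).continuous continuous_id).inter
    (isClosed_iInter fun e => isClosed_iInter fun _ =>
      isClosed_eq (adjoint (T e)).continuous continuous_const)

omit [CompleteSpace H] in
theorem apply_xi_mem_of_apply_nil_mem {v : V} {T : E → H →L[ℂ] H} (f : HGv s r v → H)
    (hf : ∀ e u, T e (f u) = f (modelS s r v e u)) {M : Submodule ℂ H}
    (hM : ∀ e, Set.MapsTo (T e) M M) (hnil : f (xi (SPath.nil s r v)) ∈ M) (p : SPath s r v) :
    f (xi p) ∈ M := by
  obtain ⟨l, hl⟩ : ∃ l, p.1.edges = l := ⟨_, rfl⟩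
  induction l generalizing p with
  | nil => rwa [show p = SPath.nil s r v from Subtype.ext (GPath.ext' p.2 hl)]
  | cons e l ih =>
    rw [← modelS_xi_tail (e := e) (by rw [hl]; rfl), ← hf]
    exact hM e (ih p.tail (by simp [SPath.tail, GPath.tail, hl]))

end Wandering

abbrev receivers (r : E → V) : Type _ := {v : V // ∃ e, r e = v}

section Decomposition

variable {H HR : Type*} [NormedAddCommGroup H] [InnerProductSpace ℂ H] [CompleteSpace H]
  [NormedAddCommGroup HR] [InnerProductSpace ℂ HR] [CompleteSpace HR]

/-- The isometries `W p` and `WR` exhibit `(Q, T)` as unitarily equivalent to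
`⊕_{v ∈ V_r} (P^v, S^v)^{(A v)} ⊕ (R, L)`, with `(R, L)` a full CK family. -/
structure IsWoldDecomposition (s r : E → V) {A : receivers r → Type*}
    (Q : V → H →L[ℂ] H) (T : E → H →L[ℂ] H) (W : ∀ p : Σ v, A v, HGv s r p.1.1 →ₗᵢ[ℂ] H)
    (R : V → HR →L[ℂ] HR) (L : E → HR →L[ℂ] HR) (WR : HR →ₗᵢ[ℂ] H) : Prop where
  isFullCK : IsFullCK s r R L
  orthogonal : ∀ p q, p ≠ q → ∀ x y, (inner ℂ (W p x) (W q y) : ℂ) = 0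
  orthogonal_fullCK : ∀ p x (y : HR), (inner ℂ (W p x) (WR y) : ℂ) = 0
  total : (Submodule.span ℂ (Set.range WR ∪ ⋃ p, Set.range (W p))).topologicalClosure = ⊤
  intertwines_modelP : ∀ p w x, Q w (W p x) = W p (modelP s r p.1.1 w x)
  intertwines_modelS : ∀ p e x, T e (W p x) = W p (modelS s r p.1.1 e x)
  intertwines_R : ∀ w x, Q w (WR x) = WR (R w x)
  intertwines_L : ∀ e x, T e (WR x) = WR (L e x)

def shiftPart {A : receivers r → Type*} (W : ∀ p : Σ v, A v, HGv s r p.1.1 →ₗᵢ[ℂ] H) :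
    Submodule ℂ H :=
  (Submodule.span ℂ (⋃ p, Set.range (W p))).topologicalClosure

namespace IsWoldDecomposition

variable {A A' : receivers r → Type u} {Q : V → H →L[ℂ] H} {T : E → H →L[ℂ] H}
  {W : ∀ p : Σ v, A v, HGv s r p.1.1 →ₗᵢ[ℂ] H} {R : V → HR →L[ℂ] HR} {L : E → HR →L[ℂ] HR}
  {WR : HR →ₗᵢ[ℂ] H} (hD : IsWoldDecomposition s r Q T W R L WR)
include hD

theorem vacuum_mem_wandering (p : Σ v, A v) :
    W p (xi (SPath.nil s r p.1.1)) ∈ wandering s r Q T p.1.1 := by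
  refine ⟨?_, fun e _ => eq_zero_of_forall_inner_eq_zero hD.total ?_⟩
  · rw [hD.intertwines_modelP, modelP_xi, if_pos]; rfl
  rintro _ (⟨y, rfl⟩ | ⟨_, ⟨q, rfl⟩, x, rfl⟩)
  · rw [adjoint_inner_left, hD.intertwines_L]
    exact hD.orthogonal_fullCK p _ _
  · rw [adjoint_inner_left, hD.intertwines_modelS]
    by_cases hpq : p = q
    · subst hpq
      rw [LinearIsometry.inner_map_map, inner_xi_left, modelS_apply_nil]
    · exact hD.orthogonal p q hpq _ _

omit [CompleteSpace H] in
theorem orthonormal_vacuum (v : receivers r) :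
    Orthonormal ℂ fun a : A v => W ⟨v, a⟩ (xi (SPath.nil s r v)) := by
  rw [orthonormal_iff_ite]
  intro a a'
  split_ifs with h
  · rw [h, LinearIsometry.inner_map_map, inner_xi_left, xi_apply, if_pos rfl]
  · exact hD.orthogonal _ _ (by simpa using h) _ _

theorem inner_fullCK_eq_zero_of_mem_wandering {v : receivers r} (hQ : adjoint (Q v.1) = Q v.1)
    {x : H} (hx : x ∈ wandering s r Q T v.1) (y : HR) : (inner ℂ x (WR y) : ℂ) = 0 := by
  have hsum := ((hD.isFullCK v.1 v.2 y).mapL WR.toContinuousLinearMap).mapL (innerSL ℂ x)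
  have hterm : ∀ e : {e : E // r e = v.1},
      innerSL ℂ x (WR.toContinuousLinearMap (L e.1 (adjoint (L e.1) y))) = 0 := by
    intro e
    simp only [innerSL_apply_apply, LinearIsometry.coe_toContinuousLinearMap]
    rw [← hD.intertwines_L, ← adjoint_inner_left, hx.2 e.1 e.2, inner_zero_left]
  calc (inner ℂ x (WR y) : ℂ) = inner ℂ (Q v.1 x) (WR y) := by rw [hx.1]
    _ = inner ℂ x (WR (R v.1 y)) := by
      rw [← hQ, adjoint_inner_left, hD.intertwines_R]
    _ = 0 := hsum.unique (by simpa only [hterm] using hasSum_zero)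

theorem inner_W_xi_eq_zero_of_mem_wandering {v : receivers r} (hQ : adjoint (Q v.1) = Q v.1)
    {x : H} (hx : x ∈ wandering s r Q T v.1)
    (hz : ∀ a : A v, (inner ℂ (W ⟨v, a⟩ (xi (SPath.nil s r v.1))) x : ℂ) = 0)
    (q : Σ v, A v) (p : SPath s r q.1.1) : (inner ℂ x (W q (xi p)) : ℂ) = 0 := by
  rw [← hx.1, ← hQ, adjoint_inner_left, hD.intertwines_modelP, modelP_xi]
  split_ifs with hrng
  · rcases hp : p.1.edges with _ | ⟨e, l⟩
    · obtain ⟨⟨w, hw⟩, a⟩ := q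
      have hwv : (⟨w, hw⟩ : receivers r) = v := by
        ext
        rw [← p.2, ← hrng]
        simp [GPath.rng, hp]
      subst hwv
      rw [show p = SPath.nil s r w from Subtype.ext (GPath.ext' p.2 hp)]
      exact inner_eq_zero_symm.mp (hz a)
    · have hre : r e = v.1 := by simpa [GPath.rng, hp] using hrng
      rw [← modelS_xi_tail (e := e) (by rw [hp]; rfl), ← hD.intertwines_modelS,
        ← adjoint_inner_left, hx.2 e hre, inner_zero_left]
  · rw [map_zero, inner_zero_right]

theorem eq_zero_of_mem_wandering {v : receivers r} (hQ : adjoint (Q v.1) = Q v.1)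
    {x : H} (hx : x ∈ wandering s r Q T v.1)
    (hz : ∀ a : A v, (inner ℂ (W ⟨v, a⟩ (xi (SPath.nil s r v.1))) x : ℂ) = 0) : x = 0 := by
  refine eq_zero_of_forall_inner_eq_zero hD.total ?_
  rintro _ (⟨y, rfl⟩ | ⟨_, ⟨q, rfl⟩, u, rfl⟩)
  · exact hD.inner_fullCK_eq_zero_of_mem_wandering hQ hx y
  · have hzero : (innerSL ℂ x).comp (W q).toContinuousLinearMap = 0 :=
      ContinuousLinearMap.ext_on (Submodule.dense_iff_topologicalClosure_eq_top.mpr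
        (dense_span_xi _)) (by
          rintro _ ⟨p, rfl⟩
          exact hD.inner_W_xi_eq_zero_of_mem_wandering hQ hx hz q p)
    exact congr($hzero u)

theorem wandering_le_shiftPart {v : receivers r} (hQ : adjoint (Q v.1) = Q v.1) :
    wandering s r Q T v.1 ≤ shiftPart W := by
  set C := (Submodule.span ℂ
    (Set.range fun a : A v => W ⟨v, a⟩ (xi (SPath.nil s r v.1)))).topologicalClosure
  have hCW : C ≤ wandering s r Q T v.1 :=
    Submodule.topologicalClosure_minimal _
      (Submodule.span_le.mpr (Set.range_subset_iff.mpr fun a => hD.vacuum_mem_wandering ⟨v, a⟩))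
      (isClosed_wandering Q T v.1)
  have hWC : wandering s r Q T v.1 ≤ C := by
    refine Submodule.le_of_orthogonal_inf_eq_bot hCW ((Submodule.eq_bot_iff _).mpr ?_)
    rintro x ⟨hxC, hxW⟩
    exact hD.eq_zero_of_mem_wandering hQ hxW fun a => (Submodule.mem_orthogonal C x).mp hxC _
      (Submodule.le_topologicalClosure _ (Submodule.subset_span (Set.mem_range_self a)))
  refine hWC.trans (Submodule.topologicalClosure_mono (Submodule.span_mono ?_))
  rintro _ ⟨a, rfl⟩
  exact Set.mem_iUnion.mpr ⟨⟨v, a⟩, Set.mem_range_self _⟩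

omit [CompleteSpace H] in
theorem mapsTo_shiftPart (e : E) : Set.MapsTo (T e) (shiftPart W) (shiftPart W) := by
  have hspan : Submodule.span ℂ (⋃ p, Set.range (W p)) ≤
      (shiftPart W).comap (T e : H →ₗ[ℂ] H) := by
    rw [Submodule.span_le]
    rintro _ ⟨_, ⟨p, rfl⟩, u, rfl⟩
    rw [SetLike.mem_coe, Submodule.mem_comap, ContinuousLinearMap.coe_coe, hD.intertwines_modelS]
    exact Submodule.le_topologicalClosure _
      (Submodule.subset_span (Set.mem_iUnion.mpr ⟨p, Set.mem_range_self _⟩))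
  exact Submodule.topologicalClosure_minimal _ hspan
    ((Submodule.isClosed_topologicalClosure _).preimage (T e).continuous)

theorem shiftPart_le {HR' : Type*} [NormedAddCommGroup HR'] [InnerProductSpace ℂ HR']
    [CompleteSpace HR'] {R' : V → HR' →L[ℂ] HR'} {L' : E → HR' →L[ℂ] HR'} {WR' : HR' →ₗᵢ[ℂ] H}
    {W' : ∀ p : Σ v, A' v, HGv s r p.1.1 →ₗᵢ[ℂ] H} (hQ : ∀ v, adjoint (Q v) = Q v)
    (hD' : IsWoldDecomposition s r Q T W' R' L' WR') : shiftPart W' ≤ shiftPart W := by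
  refine Submodule.topologicalClosure_minimal _ ?_ (Submodule.isClosed_topologicalClosure _)
  rw [Submodule.span_le]
  rintro _ ⟨_, ⟨q, rfl⟩, u, rfl⟩
  refine apply_mem_of_forall_xi_mem (W' q).toContinuousLinearMap
    (Submodule.isClosed_topologicalClosure _) (fun p => ?_) u
  exact apply_xi_mem_of_apply_nil_mem (W' q) (hD'.intertwines_modelS q)
    hD.mapsTo_shiftPart (hD.wandering_le_shiftPart (hQ _)
      (hD'.vacuum_mem_wandering q)) p

theorem orthogonal_shiftPart : (shiftPart W)ᗮ = LinearMap.range WR.toLinearMap := by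
  have : CompleteSpace (LinearMap.range WR.toLinearMap) :=
    WR.isometry.isClosedEmbedding.isClosed_range.completeSpace_coe
  have hle : LinearMap.range WR.toLinearMap ≤ (shiftPart W)ᗮ := by
    rw [← Submodule.isOrtho_iff_le, Submodule.isOrtho_comm, Submodule.isOrtho_iff_le]
    refine Submodule.topologicalClosure_minimal _ ?_ (Submodule.isClosed_orthogonal _)
    rw [Submodule.span_le]
    rintro _ ⟨_, ⟨p, rfl⟩, x, rfl⟩ _ ⟨y, rfl⟩
    exact inner_eq_zero_symm.mp (hD.orthogonal_fullCK p x y)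
  refine le_antisymm
    (Submodule.le_of_orthogonal_inf_eq_bot hle ((Submodule.eq_bot_iff _).mpr ?_)) hle
  rintro x ⟨hxR, hxS⟩
  refine eq_zero_of_forall_inner_eq_zero hD.total ?_
  rintro _ (⟨y, rfl⟩ | ⟨_, ⟨p, rfl⟩, u, rfl⟩)
  · exact Submodule.inner_left_of_mem_orthogonal (LinearMap.mem_range_self _ y) hxR
  · exact Submodule.inner_left_of_mem_orthogonal (Submodule.le_topologicalClosure _
      (Submodule.subset_span (Set.mem_iUnion.mpr ⟨p, Set.mem_range_self u⟩))) hxS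

theorem cardinal_mk_le {HR' : Type*} [NormedAddCommGroup HR'] [InnerProductSpace ℂ HR']
    [CompleteSpace HR'] {R' : V → HR' →L[ℂ] HR'} {L' : E → HR' →L[ℂ] HR'} {WR' : HR' →ₗᵢ[ℂ] H}
    {W' : ∀ p : Σ v, A' v, HGv s r p.1.1 →ₗᵢ[ℂ] H} (hQ : ∀ v, adjoint (Q v) = Q v)
    (hD' : IsWoldDecomposition s r Q T W' R' L' WR') (v : receivers r) :
    Cardinal.mk (A' v) ≤ Cardinal.mk (A v) :=
  (hD'.orthonormal_vacuum v).cardinal_mk_le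
    (b' := fun a : A v => W ⟨v, a⟩ (xi (SPath.nil s r v.1)))
    (fun a => hD'.vacuum_mem_wandering ⟨v, a⟩)
    (fun a => hD.vacuum_mem_wandering ⟨v, a⟩)
    fun _ hx hz => hD.eq_zero_of_mem_wandering (hQ _) hx hz

end IsWoldDecomposition

end Decomposition

end GraphPaper

namespace GraphPaper

theorem statement_8_general {V E : Type*}
    {H HR HR' : Type*}
    [NormedAddCommGroup H] [InnerProductSpace ℂ H] [CompleteSpace H]
    [NormedAddCommGroup HR] [InnerProductSpace ℂ HR] [CompleteSpace HR]
    [NormedAddCommGroup HR'] [InnerProductSpace ℂ HR'] [CompleteSpace HR']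
    (s r : E → V)
    (Q : V → H →L[ℂ] H) (T : E → H →L[ℂ] H) (hQT : IsTCK s r Q T)
    (A A' : {v : V // ∃ e, r e = v} → Type w)
    (R : V → HR →L[ℂ] HR) (L : E → HR →L[ℂ] HR)
    (hRLfull : IsFullCK s r R L)
    (R' : V → HR' →L[ℂ] HR') (L' : E → HR' →L[ℂ] HR')
    (hRLfull' : IsFullCK s r R' L')
    -- first decomposition of (Q, T)
    (W : ∀ p : Σ v : {v : V // ∃ e, r e = v}, A v, HGv s r p.1.1 →ₗᵢ[ℂ] H)
    (WR : HR →ₗᵢ[ℂ] H)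
    (horth : ∀ p q : Σ v : {v : V // ∃ e, r e = v}, A v, p ≠ q →
      ∀ x y, (inner ℂ (W p x) (W q y) : ℂ) = 0)
    (horthR : ∀ (p : Σ v : {v : V // ∃ e, r e = v}, A v) (x) (y : HR),
      (inner ℂ (W p x) (WR y) : ℂ) = 0)
    (htotal : (Submodule.span ℂ (Set.range ⇑WR ∪
      ⋃ p : Σ v : {v : V // ∃ e, r e = v}, A v, Set.range ⇑(W p))).topologicalClosure = ⊤)
    (hintP : ∀ (p : Σ v : {v : V // ∃ e, r e = v}, A v) (w : V) (x),
      Q w (W p x) = W p (modelP s r p.1.1 w x))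
    (hintS : ∀ (p : Σ v : {v : V // ∃ e, r e = v}, A v) (e : E) (x),
      T e (W p x) = W p (modelS s r p.1.1 e x))
    (hintRP : ∀ (w : V) (x : HR), Q w (WR x) = WR (R w x))
    (hintRS : ∀ (e : E) (x : HR), T e (WR x) = WR (L e x))
    -- second decomposition of (Q, T)
    (W' : ∀ p : Σ v : {v : V // ∃ e, r e = v}, A' v, HGv s r p.1.1 →ₗᵢ[ℂ] H)
    (WR' : HR' →ₗᵢ[ℂ] H)
    (horth' : ∀ p q : Σ v : {v : V // ∃ e, r e = v}, A' v, p ≠ q →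
      ∀ x y, (inner ℂ (W' p x) (W' q y) : ℂ) = 0)
    (horthR' : ∀ (p : Σ v : {v : V // ∃ e, r e = v}, A' v) (x) (y : HR'),
      (inner ℂ (W' p x) (WR' y) : ℂ) = 0)
    (htotal' : (Submodule.span ℂ (Set.range ⇑WR' ∪
      ⋃ p : Σ v : {v : V // ∃ e, r e = v}, A' v, Set.range ⇑(W' p))).topologicalClosure = ⊤)
    (hintP' : ∀ (p : Σ v : {v : V // ∃ e, r e = v}, A' v) (w : V) (x),
      Q w (W' p x) = W' p (modelP s r p.1.1 w x))
    (hintS' : ∀ (p : Σ v : {v : V // ∃ e, r e = v}, A' v) (e : E) (x),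
      T e (W' p x) = W' p (modelS s r p.1.1 e x))
    (hintRP' : ∀ (w : V) (x : HR'), Q w (WR' x) = WR' (R' w x))
    (hintRS' : ∀ (e : E) (x : HR'), T e (WR' x) = WR' (L' e x)) :
    (∀ v : {v : V // ∃ e, r e = v}, Cardinal.mk (A v) = Cardinal.mk (A' v)) ∧
    ∃ U : HR ≃ₗᵢ[ℂ] HR',
      (∀ (w : V) (x : HR), U (R w x) = R' w (U x)) ∧
      (∀ (e : E) (x : HR), U (L e x) = L' e (U x)) := by
  have hD : IsWoldDecomposition s r Q T W R L WR :=
    ⟨hRLfull, horth, horthR, htotal, hintP, hintS, hintRP, hintRS⟩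
  have hD' : IsWoldDecomposition s r Q T W' R' L' WR' :=
    ⟨hRLfull', horth', horthR', htotal', hintP', hintS', hintRP', hintRS'⟩
  have hQ : ∀ v, adjoint (Q v) = Q v := hQT.1
  have hrange : LinearMap.range WR.toLinearMap = LinearMap.range WR'.toLinearMap := by
    rw [← hD.orthogonal_shiftPart, ← hD'.orthogonal_shiftPart,
      le_antisymm (hD.shiftPart_le hQ hD') (hD'.shiftPart_le hQ hD)]
  obtain ⟨U, hU⟩ := WR.exists_linearIsometryEquiv_of_range_eq WR' hrange
  refine ⟨fun v => le_antisymm (hD'.cardinal_mk_le hQ hD v) (hD.cardinal_mk_le hQ hD' v), U,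
    fun w x => WR'.injective ?_, fun e x => WR'.injective ?_⟩
  · rw [hU, ← hintRP, ← hU, hintRP']
  · rw [hU, ← hintRS, ← hU, hintRS']

/-- Wold decomposition, uniqueness. Suppose a TCK family `(Q, T)` on
`H` is unitarily equivalent to the direct sum, over `v ∈ V_r`, of copies of the model
family `(P^v, S^v)` with multiplicity index sets `A v`, together with a full CK family
`(R, L)`; and also to such a direct sum with multiplicities `A' v` and full CK family
`(R', L')`.  (The unitary equivalence with the direct sum is expressed by families of
isometries onto pairwise orthogonal jointly total reducing subspaces intertwining the
corresponding summands.)  Then `A v` and `A' v` have the same cardinality for every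
`v ∈ V_r`, and `(R, L)` is unitarily equivalent to `(R', L')`. -/
theorem statement_8 {V E : Type*} [Countable V] [Countable E]
    {H HR HR' : Type*}
    [NormedAddCommGroup H] [InnerProductSpace ℂ H] [CompleteSpace H]
    [NormedAddCommGroup HR] [InnerProductSpace ℂ HR] [CompleteSpace HR]
    [NormedAddCommGroup HR'] [InnerProductSpace ℂ HR'] [CompleteSpace HR']
    (s r : E → V)
    (Q : V → H →L[ℂ] H) (T : E → H →L[ℂ] H) (hQT : IsTCK s r Q T)
    (A A' : {v : V // ∃ e, r e = v} → Type w)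
    (R : V → HR →L[ℂ] HR) (L : E → HR →L[ℂ] HR)
    (hRL : IsTCK s r R L) (hRLfull : IsFullCK s r R L)
    (R' : V → HR' →L[ℂ] HR') (L' : E → HR' →L[ℂ] HR')
    (hRL' : IsTCK s r R' L') (hRLfull' : IsFullCK s r R' L')
    -- first decomposition of (Q, T)
    (W : ∀ p : Σ v : {v : V // ∃ e, r e = v}, A v, HGv s r p.1.1 →ₗᵢ[ℂ] H)
    (WR : HR →ₗᵢ[ℂ] H)
    (horth : ∀ p q : Σ v : {v : V // ∃ e, r e = v}, A v, p ≠ q →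
      ∀ x y, (inner ℂ (W p x) (W q y) : ℂ) = 0)
    (horthR : ∀ (p : Σ v : {v : V // ∃ e, r e = v}, A v) (x) (y : HR),
      (inner ℂ (W p x) (WR y) : ℂ) = 0)
    (htotal : (Submodule.span ℂ (Set.range ⇑WR ∪
      ⋃ p : Σ v : {v : V // ∃ e, r e = v}, A v, Set.range ⇑(W p))).topologicalClosure = ⊤)
    (hintP : ∀ (p : Σ v : {v : V // ∃ e, r e = v}, A v) (w : V) (x),
      Q w (W p x) = W p (modelP s r p.1.1 w x))
    (hintS : ∀ (p : Σ v : {v : V // ∃ e, r e = v}, A v) (e : E) (x),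
      T e (W p x) = W p (modelS s r p.1.1 e x))
    (hintRP : ∀ (w : V) (x : HR), Q w (WR x) = WR (R w x))
    (hintRS : ∀ (e : E) (x : HR), T e (WR x) = WR (L e x))
    -- second decomposition of (Q, T)
    (W' : ∀ p : Σ v : {v : V // ∃ e, r e = v}, A' v, HGv s r p.1.1 →ₗᵢ[ℂ] H)
    (WR' : HR' →ₗᵢ[ℂ] H)
    (horth' : ∀ p q : Σ v : {v : V // ∃ e, r e = v}, A' v, p ≠ q →
      ∀ x y, (inner ℂ (W' p x) (W' q y) : ℂ) = 0)
    (horthR' : ∀ (p : Σ v : {v : V // ∃ e, r e = v}, A' v) (x) (y : HR'),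
      (inner ℂ (W' p x) (WR' y) : ℂ) = 0)
    (htotal' : (Submodule.span ℂ (Set.range ⇑WR' ∪
      ⋃ p : Σ v : {v : V // ∃ e, r e = v}, A' v, Set.range ⇑(W' p))).topologicalClosure = ⊤)
    (hintP' : ∀ (p : Σ v : {v : V // ∃ e, r e = v}, A' v) (w : V) (x),
      Q w (W' p x) = W' p (modelP s r p.1.1 w x))
    (hintS' : ∀ (p : Σ v : {v : V // ∃ e, r e = v}, A' v) (e : E) (x),
      T e (W' p x) = W' p (modelS s r p.1.1 e x))
    (hintRP' : ∀ (w : V) (x : HR'), Q w (WR' x) = WR' (R' w x))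
    (hintRS' : ∀ (e : E) (x : HR'), T e (WR' x) = WR' (L' e x)) :
    (∀ v : {v : V // ∃ e, r e = v}, Cardinal.mk (A v) = Cardinal.mk (A' v)) ∧
    ∃ U : HR ≃ₗᵢ[ℂ] HR',
      (∀ (w : V) (x : HR), U (R w x) = R' w (U x)) ∧
      (∀ (e : E) (x : HR), U (L e x) = L' e (U x)) :=
  statement_8_general s r Q T hQT A A' R L hRLfull R' L' hRLfull' W WR horth horthR htotal hintP
    hintS hintRP hintRS W' WR' horth' horthR' htotal' hintP' hintS' hintRP' hintRS'

end GraphPaper
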